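/- Let M = [[1, 1], [1, 2]] be the Arnol'd cat map matrix acting on ℝ², let l ≥ 1, and let f₁, …, f_{l+1} : ℝ² → ℂ be trigonometric polynomials, i.e. finite sums Σ_{k ∈ S} c_k·exp(2πi k·x) over finite sets S ⊂ ℤ². For n₁, …, n_l ∈ ℕ set N₁ = 0 and N_i = n₁ + ⋯ + n_{i-1}, and define the l-fold correlation C_{n₁,…,n_l}(f₁,…,f_{l+1}) = ∫_{[0,1]²} ∏_{i=1}^{l+1} f_i(M^{N_i} x) dx − ∏_{i=1}^{l+1} ∫_{[0,1]²} f_i(x) dx. Then the Arnol'd cat map is l-fold mixing: for every ε > 0 there exists N such that whenever min(n₁, …, n_l) ≥ N, one has |C_{n₁,…,n_l}(f₁,…,f_{l+1})| < ε. -/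

import Mathlib

/-!
Expanding each `f_i` into characters `e_k(x) = exp (2πi k·x)`, the integral of
`∏ f_i (M^{N_i} x)` keeps exactly the frequency tuples `(k_i)` with `∑ M^{N_i} k_i = 0`
(`M` is symmetric), while `∏ ∫ f_i` keeps only the tuple `k = 0`. The form
`u k = k₀ + k₁ φ` (`φ` the golden ratio) satisfies `u (M k) = φ² u k` and, `φ` being
irrational, vanishes on `ℤ²` only at `0`. Applying `u` to such a relation gives
`∑ φ^{2 N_i} u k_i = 0` with the `u k_i` in a finite set; once all gaps `n_j` are large, the
last nonzero term dominates the sum of the earlier ones, so every `k_i` vanishes. The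
correlation is then exactly `0`.
-/

open Matrix MeasureTheory Finset
open scoped goldenRatio Topology

noncomputable def torusChar {ι : Type*} [Fintype ι] (k : ι → ℤ) (x : ι → ℝ) : ℂ :=
  Complex.exp (2 * Real.pi * Complex.I * ((∑ t, (k t : ℝ) * x t : ℝ) : ℂ))

section TorusChar

variable {ι : Type*} [Fintype ι]

theorem continuous_torusChar (k : ι → ℤ) : Continuous (torusChar k) := by
  unfold torusChar; fun_prop

theorem prod_torusChar {J : Type*} (s : Finset J) (k : J → ι → ℤ) (x : ι → ℝ) :
    ∏ j ∈ s, torusChar (k j) x = torusChar (∑ j ∈ s, k j) x := by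
  simp only [torusChar, ← Complex.exp_sum, Finset.sum_apply, Int.cast_sum, sum_mul]
  push_cast
  simp only [← mul_sum]
  rw [sum_comm]

theorem torusChar_mulVec (A : Matrix ι ι ℤ) (k : ι → ℤ) (x : ι → ℝ) :
    torusChar k (A.map ((↑) : ℤ → ℝ) *ᵥ x) = torusChar (Aᵀ *ᵥ k) x := by
  simp only [torusChar, mulVec, dotProduct, mul_sum, map_apply, transpose_apply,
    Int.cast_sum, Int.cast_mul, sum_mul]
  rw [sum_comm]
  simp only [mul_comm, mul_assoc]

theorem integral_exp_two_pi_I_int_mul (a : ℤ) :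
    ∫ y in Set.Icc (0 : ℝ) 1, Complex.exp (2 * Real.pi * Complex.I * ((a * y : ℝ) : ℂ)) =
      if a = 0 then 1 else 0 := by
  rw [integral_Icc_eq_integral_Ioc, ← intervalIntegral.integral_of_le zero_le_one]
  split_ifs with ha
  · simp [ha]
  have hc : 2 * Real.pi * Complex.I * a ≠ 0 := by simp [Real.pi_ne_zero, ha]
  simp_rw [Complex.ofReal_mul, Complex.ofReal_intCast, ← mul_assoc]
  rw [integral_exp_mul_complex hc]
  have : 2 * Real.pi * Complex.I * a * (1 : ℝ) = a * (2 * Real.pi * Complex.I) := by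
    push_cast; ring
  rw [this, Complex.exp_int_mul_two_pi_mul_I]
  simp

theorem integral_torusChar (k : ι → ℤ) :
    ∫ x in Set.Icc (0 : ι → ℝ) 1, torusChar k x = if k = 0 then 1 else 0 := by
  have hprod : ∀ x, torusChar k x =
      ∏ t, Complex.exp (2 * Real.pi * Complex.I * ((k t * x t : ℝ) : ℂ)) := by
    intro x
    simp only [torusChar, ← Complex.exp_sum, Complex.ofReal_sum, mul_sum]
  rw [← Set.pi_univ_Icc, volume_pi, Measure.restrict_pi_pi]
  simp_rw [hprod]
  rw [integral_fintype_prod_eq_prod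
    (fun t y => Complex.exp (2 * Real.pi * Complex.I * ((k t * y : ℝ) : ℂ)))]
  simp only [Pi.zero_apply, Pi.one_apply, integral_exp_two_pi_I_int_mul, prod_boole, mem_univ,
    true_implies, funext_iff]

theorem integral_sum_mul_torusChar {P : Type*} (s : Finset P) (d : P → ℂ)
    (q : P → ι → ℤ) :
    ∫ x in Set.Icc (0 : ι → ℝ) 1, ∑ p ∈ s, d p * torusChar (q p) x =
      ∑ p ∈ s, d p * if q p = 0 then 1 else 0 := by
  have hint : ∀ k : ι → ℤ, IntegrableOn (torusChar k) (Set.Icc 0 1) := fun k =>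
    (continuous_torusChar k).continuousOn.integrableOn_compact isCompact_Icc
  rw [integral_finsetSum _ fun p _ => (hint (q p)).const_mul (d p)]
  simp_rw [integral_const_mul, integral_torusChar]

theorem prod_sum_mul_torusChar_mulVec {J : Type*} [Fintype J] [DecidableEq J]
    (S : J → Finset (ι → ℤ)) (c : J → (ι → ℤ) → ℂ) (A : J → Matrix ι ι ℤ)
    (x : ι → ℝ) :
    ∏ j, ∑ k ∈ S j, c j k * torusChar k ((A j).map ((↑) : ℤ → ℝ) *ᵥ x) =
      ∑ p ∈ Fintype.piFinset S,
        (∏ j, c j (p j)) * torusChar (∑ j, (A j)ᵀ *ᵥ p j) x := by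
  simp only [torusChar_mulVec]
  rw [prod_univ_sum]
  refine sum_congr rfl fun p _ => ?_
  rw [prod_mul_distrib, prod_torusChar]

theorem integral_prod_mulVec_eq_prod_integral {J : Type*} [Fintype J] [DecidableEq J]
    (f : J → (ι → ℝ) → ℂ) (S : J → Finset (ι → ℤ))
    (c : J → (ι → ℤ) → ℂ)
    (hf : ∀ j x, f j x = ∑ k ∈ S j, c j k * torusChar k x) (A : J → Matrix ι ι ℤ)
    (hA : ∀ p ∈ Fintype.piFinset S, ∑ j, (A j)ᵀ *ᵥ p j = 0 → p = 0) :
    ∫ x in Set.Icc (0 : ι → ℝ) 1, ∏ j, f j ((A j).map ((↑) : ℤ → ℝ) *ᵥ x) =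
      ∏ j, ∫ x in Set.Icc (0 : ι → ℝ) 1, f j x := by
  have hfreq : ∀ p ∈ Fintype.piFinset S, ∑ j, (A j)ᵀ *ᵥ p j = 0 ↔ p = 0 :=
    fun p hp => ⟨hA p hp, by rintro rfl; simp only [Pi.zero_apply, mulVec_zero, sum_const_zero]⟩
  simp only [hf]
  rw [integral_congr_ae (.of_forall (prod_sum_mul_torusChar_mulVec S c A)),
    integral_sum_mul_torusChar]
  calc ∑ p ∈ Fintype.piFinset S,
        (∏ j, c j (p j)) * (if ∑ j, (A j)ᵀ *ᵥ p j = 0 then 1 else 0)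
      = ∑ p ∈ Fintype.piFinset S, ∏ j, c j (p j) * if p j = 0 then 1 else 0 := by
        refine sum_congr rfl fun p hp => ?_
        rw [prod_mul_distrib, prod_boole]
        simp only [hfreq p hp, funext_iff, Pi.zero_apply, mem_univ, true_implies]
    _ = ∏ j, ∑ k ∈ S j, c j k * if k = 0 then 1 else 0 :=
        (prod_univ_sum S fun j k => c j k * if k = 0 then 1 else 0).symm
    _ = ∏ j, ∫ x in Set.Icc (0 : ι → ℝ) 1, ∑ k ∈ S j, c j k * torusChar k x :=
        prod_congr rfl fun j _ => (integral_sum_mul_torusChar (S j) (c j) id).symm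

end TorusChar

theorem forall_eq_zero_of_sum_pow_mul_eq_zero {ι : Type*} [LinearOrder ι] {r B δ : ℝ}
    (hr : 1 < r) {N : ℕ} (s : Finset ι) (e : ι → ℕ) (a : ι → ℝ)
    (he : ∀ i ∈ s, ∀ j ∈ s, i < j → e i + N ≤ e j)
    (haB : ∀ i ∈ s, |a i| ≤ B) (haδ : ∀ i ∈ s, a i ≠ 0 → δ ≤ |a i|)
    (hN : s.card * B < δ * r ^ N) (hsum : ∑ i ∈ s, r ^ e i * a i = 0) :
    ∀ i ∈ s, a i = 0 := by
  induction s using Finset.induction_on_max with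
  | empty => simp
  | insert m s hlt ih =>
    have hm : m ∉ s := fun h => lt_irrefl m (hlt m h)
    have hr0 : 0 < r := zero_lt_one.trans hr
    have hcard : (s.card : ℝ) * B ≤ (insert m s).card * B := by
      have hB : 0 ≤ B := (abs_nonneg _).trans (haB m (mem_insert_self m s))
      gcongr
      exact subset_insert m s
    rw [sum_insert hm] at hsum
    have ham : a m = 0 := by
      by_contra ham
      have htail : |∑ i ∈ s, r ^ e i * a i| * r ^ N ≤ s.card * B * r ^ e m := by
        calc |∑ i ∈ s, r ^ e i * a i| * r ^ N ≤ ∑ i ∈ s, r ^ (e i + N) * |a i| := by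
              rw [← abs_of_pos (pow_pos hr0 N), ← abs_mul, sum_mul]
              refine (abs_sum_le_sum_abs _ _).trans_eq (sum_congr rfl fun i _ => ?_)
              rw [abs_mul, abs_mul, abs_of_pos (pow_pos hr0 _), abs_of_pos (pow_pos hr0 _),
                pow_add]
              ring
          _ ≤ ∑ i ∈ s, r ^ e m * B := by
              refine sum_le_sum fun i hi => mul_le_mul ?_ (haB i (mem_insert_of_mem hi))
                (abs_nonneg _) (pow_pos hr0 _).le
              exact pow_le_pow_right₀ hr.le
                (he i (mem_insert_of_mem hi) m (mem_insert_self m s) (hlt i hi))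
          _ = s.card * B * r ^ e m := by rw [sum_const, nsmul_eq_mul]; ring
      have hhead : r ^ e m * δ ≤ |∑ i ∈ s, r ^ e i * a i| := by
        rw [eq_neg_of_add_eq_zero_right hsum, abs_neg, abs_mul, abs_of_pos (pow_pos hr0 _)]
        exact mul_le_mul_of_nonneg_left (haδ m (mem_insert_self m s) ham) (pow_pos hr0 _).le
      have := pow_pos hr0 (e m)
      have := pow_pos hr0 N
      nlinarith
    intro i hi
    rcases mem_insert.1 hi with rfl | hi
    · exact ham
    rw [ham, mul_zero, zero_add] at hsum
    exact ih (fun i hi j hj => he i (mem_insert_of_mem hi) j (mem_insert_of_mem hj))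
      (fun i hi => haB i (mem_insert_of_mem hi)) (fun i hi => haδ i (mem_insert_of_mem hi))
      (hcard.trans_lt hN) hsum i hi

def catMap : Matrix (Fin 2) (Fin 2) ℤ := !![1, 1; 1, 2]

theorem transpose_catMap : catMapᵀ = catMap := by
  ext i j; fin_cases i <;> fin_cases j <;> rfl

theorem map_catMap_pow (n : ℕ) :
    !![(1 : ℝ), 1; 1, 2] ^ n = (catMap ^ n).map ((↑) : ℤ → ℝ) := by
  have h : !![(1 : ℝ), 1; 1, 2] = (Int.castRingHom ℝ).mapMatrix catMap := by
    ext i j; fin_cases i <;> fin_cases j <;> simp [catMap]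
  rw [h, ← map_pow]
  rfl

noncomputable def goldenForm : (Fin 2 → ℤ) →+ ℝ where
  toFun k := k 0 + k 1 * φ
  map_zero' := by simp
  map_add' k k' := by simp only [Pi.add_apply, Int.cast_add]; ring

theorem goldenForm_eq_zero_iff {k : Fin 2 → ℤ} : goldenForm k = 0 ↔ k = 0 := by
  refine ⟨fun h => ?_, fun h => h ▸ map_zero goldenForm⟩
  have hk1 : k 1 = 0 := by
    by_contra hk1
    exact (((Real.goldenRatio_irrational.intCast_mul hk1).intCast_add (k 0)).ne_zero)
      (by rw [← h]; simp [goldenForm])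
  have hk0 : k 0 = 0 := by simpa [goldenForm, hk1] using h
  ext t; fin_cases t <;> assumption

theorem goldenForm_catMap_mulVec (k : Fin 2 → ℤ) :
    goldenForm (catMap *ᵥ k) = φ ^ 2 * goldenForm k := by
  simp only [goldenForm, AddMonoidHom.coe_mk, ZeroHom.coe_mk, catMap, mulVec, dotProduct,
    Fin.sum_univ_two, of_apply, cons_val', cons_val_zero, cons_val_one, empty_val',
    cons_val_fin_one]
  push_cast
  linear_combination (-(k 0 + k 1 * (φ + 1) : ℝ)) * Real.goldenRatio_sq

theorem goldenForm_catMap_pow_mulVec (n : ℕ) (k : Fin 2 → ℤ) :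
    goldenForm (catMap ^ n *ᵥ k) = (φ ^ 2) ^ n * goldenForm k := by
  induction n with
  | zero => simp
  | succ n ih =>
    rw [pow_succ', ← mulVec_mulVec, goldenForm_catMap_mulVec, ih, pow_succ']
    ring

theorem catMap_pow_mulVec_sum_eq_zero {ι : Type*} [Fintype ι] [LinearOrder ι]
    (T : Finset (Fin 2 → ℤ)) :
    ∃ N : ℕ, ∀ e : ι → ℕ, (∀ i j, i < j → e i + N ≤ e j) →
      ∀ p : ι → Fin 2 → ℤ, (∀ i, p i ∈ T) →
        ∑ i, catMap ^ e i *ᵥ p i = 0 → p = 0 := by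
  have hr : 1 < φ ^ 2 := one_lt_pow₀ Real.one_lt_goldenRatio two_ne_zero
  set B := ∑ k ∈ T, |goldenForm k|
  have hsmall : ∀ᶠ δ in 𝓝[>] (0 : ℝ), ∀ k ∈ T, k ≠ 0 → δ ≤ |goldenForm k| := by
    refine T.eventually_all.2 fun k _ => Filter.Eventually.filter_mono nhdsWithin_le_nhds ?_
    by_cases hk : k = 0
    · exact Filter.Eventually.of_forall fun _ h => absurd hk h
    · exact (eventually_le_nhds (abs_pos.2 (mt goldenForm_eq_zero_iff.1 hk))).mono
        fun _ h _ => h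
  obtain ⟨δ, hδT, hδ⟩ := (hsmall.and self_mem_nhdsWithin).exists
  obtain ⟨N, hN⟩ := pow_unbounded_of_one_lt (Fintype.card ι * B / δ) hr
  refine ⟨N, fun e he p hpT hsum => funext fun i => goldenForm_eq_zero_iff.1 ?_⟩
  refine forall_eq_zero_of_sum_pow_mul_eq_zero hr univ e (fun i => goldenForm (p i))
    (fun i _ j _ hij => he i j hij)
    (fun i _ => single_le_sum (f := fun k => |goldenForm k|) (fun k _ => abs_nonneg _) (hpT i))
    (fun i _ hi => hδT _ (hpT i) (mt (congrArg goldenForm) (by simpa using hi)))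
    ((div_lt_iff₀' hδ).1 hN) ?_ i (mem_univ i)
  simp_rw [← goldenForm_catMap_pow_mulVec, ← map_sum, hsum, map_zero]

theorem sum_range_add_le_sum_range {n : ℕ → ℕ} {N l : ℕ} (hn : ∀ j < l, N ≤ n j)
    {i j : ℕ} (hij : i < j) (hjl : j ≤ l) :
    ∑ t ∈ range i, n t + N ≤ ∑ t ∈ range j, n t :=
  calc ∑ t ∈ range i, n t + N ≤ ∑ t ∈ range (i + 1), n t := by
        rw [sum_range_succ]; exact Nat.add_le_add_left (hn i (by omega)) _
    _ ≤ ∑ t ∈ range j, n t := sum_le_sum_of_subset (range_subset_range.2 hij)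

theorem acm_l_fold_mixing_general (l : ℕ) (f : ℕ → (Fin 2 → ℝ) → ℂ)
    (hf : ∀ i ≤ l, ∃ (S : Finset (Fin 2 → ℤ)) (c : (Fin 2 → ℤ) → ℂ), ∀ x, f i x =
      ∑ k ∈ S, c k * Complex.exp
        (2 * Real.pi * Complex.I * ((∑ t, (k t : ℝ) * x t : ℝ) : ℂ))) :
    ∀ ε > (0 : ℝ), ∃ N : ℕ, ∀ n : ℕ → ℕ, (∀ j < l, N ≤ n j) →
      ‖(∫ x in Set.Icc (0 : Fin 2 → ℝ) 1,
            ∏ i ∈ Finset.range (l + 1),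
              f i (((!![(1 : ℝ), 1; 1, 2]) ^ (∑ j ∈ Finset.range i, n j)).mulVec x))
          - ∏ i ∈ Finset.range (l + 1),
              ∫ x in Set.Icc (0 : Fin 2 → ℝ) 1, f i x‖ < ε := by
  intro ε hε
  choose S c hc using fun i : Fin (l + 1) => hf i (Nat.lt_succ_iff.1 i.2)
  obtain ⟨N, hN⟩ := catMap_pow_mulVec_sum_eq_zero (ι := Fin (l + 1)) (univ.biUnion S)
  refine ⟨N, fun n hn => ?_⟩
  have hsep (i j : Fin (l + 1)) (hij : i < j) :
      ∑ t ∈ range i, n t + N ≤ ∑ t ∈ range j, n t :=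
    sum_range_add_le_sum_range hn hij (Nat.lt_succ_iff.1 j.2)
  have hmix := integral_prod_mulVec_eq_prod_integral (fun i : Fin (l + 1) => f i) S c hc
    (fun i => catMap ^ ∑ t ∈ range i, n t) fun p hp hsum =>
      hN _ hsep p (fun i => mem_biUnion.2 ⟨i, mem_univ i, Fintype.mem_piFinset.1 hp i⟩)
        (by simpa only [transpose_pow, transpose_catMap] using hsum)
  simp only [prod_range, map_catMap_pow, hmix, sub_self, norm_zero, hε]

/-- `l`-fold mixing of the Arnol'd cat map `M = [[1, 1], [1, 2]]` (indices shifted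
to start at `0`): for trigonometric polynomials `f₀, …, f_l` on the torus, the
`l`-fold correlation
`C_{n₀,…,n_{l-1}}(f₀,…,f_l) = ∫ ∏_i f_i(M^{N_i}x) dx − ∏_i ∫ f_i dx`
(with `N_i = n₀ + ⋯ + n_{i-1}`) is smaller than any `ε > 0` whenever all the time
separations `n_j` are large enough. -/
theorem acm_l_fold_mixing (l : ℕ) (hl : 1 ≤ l) (f : ℕ → (Fin 2 → ℝ) → ℂ)
    (hf : ∀ i ≤ l, ∃ (S : Finset (Fin 2 → ℤ)) (c : (Fin 2 → ℤ) → ℂ), ∀ x, f i x =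
      ∑ k ∈ S, c k * Complex.exp
        (2 * Real.pi * Complex.I * ((∑ t, (k t : ℝ) * x t : ℝ) : ℂ))) :
    ∀ ε > (0 : ℝ), ∃ N : ℕ, ∀ n : ℕ → ℕ, (∀ j < l, N ≤ n j) →
      ‖(∫ x in Set.Icc (0 : Fin 2 → ℝ) 1,
            ∏ i ∈ Finset.range (l + 1),
              f i (((!![(1 : ℝ), 1; 1, 2]) ^ (∑ j ∈ Finset.range i, n j)).mulVec x))
          - ∏ i ∈ Finset.range (l + 1),
              ∫ x in Set.Icc (0 : Fin 2 → ℝ) 1, f i x‖ < ε :=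
  acm_l_fold_mixing_general l f hf
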